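/- arXiv:1510.04849 — 3 statements merged into one kernel-verified Lean document; each statement's English description precedes it below -/
import Mathlib

section
/- For any Cauchy sequence u in A* with respect to the profinite metric, the set F_u = {L regular | ∃n₀ ∀n ≥ n₀ : u_n ∈ L} is an ultrafilter of the Boolean algebra of regular languages over A*. -/
/-!
A language recognized by `φ : A* →* M`, with `M` finite, has membership determined by `φ`,
and two words that `φ` distinguishes are at distance at least `2^{-|M|}`. Along a Cauchy
sequence the image under `φ` is therefore eventually constant, so every regular language
eventually contains the sequence or eventually avoids it. The filter axioms hold because
"eventually" is a filter on `ℕ` and regular languages are closed under intersection.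
-/

open Filter

/-- A finite monoid of cardinality k separates the words x and y if some monoid morphism
from the free monoid into it distinguishes them. -/
def SeparatesCard (A : Type) (k : ℕ) (x y : List A) : Prop :=
  ∃ (M : Type) (_ : Monoid M) (_ : Fintype M), Fintype.card M = k ∧
    ∃ φ : FreeMonoid A →* M, φ x ≠ φ y

open Classical in
/-- The profinite metric d(x,y) = 2^{-min{|M| : M separates x and y}} on A*. -/
noncomputable def pdist {A : Type} (x y : List A) : ℝ :=
  if h : {k : ℕ | SeparatesCard A k x y}.Nonempty then
    ((2 : ℝ) ^ (sInf {k : ℕ | SeparatesCard A k x y}))⁻¹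
  else 0

/-- A Cauchy sequence of words with respect to the profinite metric. -/
def IsPCauchy {A : Type} (u : ℕ → List A) : Prop :=
  ∀ ε : ℝ, 0 < ε → ∃ N : ℕ, ∀ m n : ℕ, N ≤ m → N ≤ n → pdist (u m) (u n) < ε

/-- A language is regular iff it is recognized by a finite monoid. -/
def RegularLang {A : Type} (L : Set (List A)) : Prop :=
  ∃ (M : Type) (_ : Monoid M) (_ : Fintype M) (φ : FreeMonoid A →* M) (S : Set M),
    L = φ ⁻¹' S

/-- The set of regular languages eventually containing the sequence u. -/
def Fu {A : Type} (u : ℕ → List A) : Set (Set (List A)) :=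
  {L | RegularLang L ∧ ∃ n₀ : ℕ, ∀ n : ℕ, n₀ ≤ n → u n ∈ L}

variable {A : Type}

lemma inv_two_pow_card_le_pdist {M : Type} [Monoid M] [Fintype M] (φ : FreeMonoid A →* M)
    {x y : List A} (h : φ x ≠ φ y) : ((2 : ℝ) ^ Fintype.card M)⁻¹ ≤ pdist x y := by
  have hsep : SeparatesCard A (Fintype.card M) x y := ⟨M, ‹_›, ‹_›, rfl, φ, h⟩
  rw [pdist, dif_pos ⟨_, hsep⟩]
  exact inv_anti₀ (by positivity) (pow_le_pow_right₀ one_le_two (Nat.sInf_le hsep))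

lemma IsPCauchy.eventually_map_eq {M : Type} [Monoid M] [Fintype M] (φ : FreeMonoid A →* M)
    {u : ℕ → List A} (hu : IsPCauchy u) : ∃ m : M, ∀ᶠ n in atTop, φ (u n) = m := by
  obtain ⟨N, hN⟩ := hu ((2 : ℝ) ^ Fintype.card M)⁻¹ (by positivity)
  refine ⟨φ (u N), eventually_atTop.2 ⟨N, fun n hn => ?_⟩⟩
  by_contra h
  exact (hN n N hn le_rfl).not_ge (inv_two_pow_card_le_pdist φ h)

lemma regularLang_univ : RegularLang (Set.univ : Set (List A)) :=
  ⟨Unit, inferInstance, inferInstance, 1, Set.univ, rfl⟩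

lemma RegularLang.inter {L K : Set (List A)} (hL : RegularLang L) (hK : RegularLang K) :
    RegularLang (L ∩ K) := by
  obtain ⟨M, _, _, φ, S, rfl⟩ := hL
  obtain ⟨M', _, _, ψ, T, rfl⟩ := hK
  exact ⟨M × M', inferInstance, inferInstance, φ.prod ψ, S ×ˢ T, rfl⟩

lemma RegularLang.compl {L : Set (List A)} (hL : RegularLang L) : RegularLang Lᶜ := by
  obtain ⟨M, _, _, φ, S, rfl⟩ := hL
  exact ⟨M, ‹_›, ‹_›, φ, Sᶜ, rfl⟩

lemma IsPCauchy.eventually_mem_or_eventually_notMem {u : ℕ → List A} (hu : IsPCauchy u)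
    {L : Set (List A)} (hL : RegularLang L) :
    (∀ᶠ n in atTop, u n ∈ L) ∨ ∀ᶠ n in atTop, u n ∉ L := by
  obtain ⟨M, _, _, φ, S, rfl⟩ := hL
  obtain ⟨m, hm⟩ := hu.eventually_map_eq φ
  by_cases hmS : m ∈ S
  · exact Or.inl (hm.mono fun n hn => show φ (u n) ∈ S from hn ▸ hmS)
  · exact Or.inr (hm.mono fun n hn => show φ (u n) ∉ S from hn ▸ hmS)

lemma mem_Fu_iff {u : ℕ → List A} {L : Set (List A)} :
    L ∈ Fu u ↔ RegularLang L ∧ ∀ᶠ n in atTop, u n ∈ L := by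
  rw [eventually_atTop]
  rfl

theorem stmt8_general {A : Type} (u : ℕ → List A) (hu : IsPCauchy u) :
    (∀ L ∈ Fu u, RegularLang L) ∧
    (Fu u).Nonempty ∧
    (∅ : Set (List A)) ∉ Fu u ∧
    (∀ L K : Set (List A), L ∈ Fu u → RegularLang K → L ⊆ K → K ∈ Fu u) ∧
    (∀ L K : Set (List A), L ∈ Fu u → K ∈ Fu u → L ∩ K ∈ Fu u) ∧
    (∀ L : Set (List A), RegularLang L → L ∈ Fu u ∨ Lᶜ ∈ Fu u) := by
  simp only [mem_Fu_iff]
  refine ⟨fun L hL => hL.1, ⟨Set.univ, regularLang_univ, by simp⟩, ?_, ?_, ?_, ?_⟩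
  · rintro ⟨-, h⟩
    exact h.exists.elim fun _ => id
  · rintro L K ⟨-, hL⟩ hK hLK
    exact ⟨hK, hL.mono fun _ hn => hLK hn⟩
  · rintro L K ⟨hL, hLu⟩ ⟨hK, hKu⟩
    exact ⟨hL.inter hK, hLu.and hKu⟩
  · intro L hL
    exact (hu.eventually_mem_or_eventually_notMem hL).imp (⟨hL, ·⟩) (⟨hL.compl, ·⟩)

/-- For any Cauchy sequence u in A* (profinite metric), the set
F_u = {L regular | ∃n₀ ∀n ≥ n₀ : u_n ∈ L} is an ultrafilter of the Boolean algebra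
of regular languages over A*. -/
theorem stmt8 {A : Type} [Fintype A] (u : ℕ → List A) (hu : IsPCauchy u) :
    (∀ L ∈ Fu u, RegularLang L) ∧
    (Fu u).Nonempty ∧
    (∅ : Set (List A)) ∉ Fu u ∧
    (∀ L K : Set (List A), L ∈ Fu u → RegularLang K → L ⊆ K → K ∈ Fu u) ∧
    (∀ L K : Set (List A), L ∈ Fu u → K ∈ Fu u → L ∩ K ∈ Fu u) ∧
    (∀ L : Set (List A), RegularLang L → L ∈ Fu u ∨ Lᶜ ∈ Fu u) :=
  stmt8_general u hu
end

section
/- The free profinite monoid over a finite alphabet A (the metric completion of A* under the profinite metric) is homeomorphic to the Stone space of the Boolean algebra of regular languages over A*, i.e., the space of ultrafilters of regular languages with the topology generated by the sets {γ : L ∈ γ}. -/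
/-- An ultrafilter of the Boolean algebra of regular languages over A*. -/
def IsRegUltrafilter {A : Type} (γ : Set (Set (List A))) : Prop :=
  (∀ L ∈ γ, RegularLang L) ∧ γ.Nonempty ∧ (∅ : Set (List A)) ∉ γ ∧
  (∀ L K : Set (List A), L ∈ γ → RegularLang K → L ⊆ K → K ∈ γ) ∧
  (∀ L K : Set (List A), L ∈ γ → K ∈ γ → L ∩ K ∈ γ) ∧
  (∀ L : Set (List A), RegularLang L → L ∈ γ ∨ Lᶜ ∈ γ)

/-- The Stone space of the Boolean algebra of regular languages over A*: the set of its
ultrafilters. -/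
def RegStone (A : Type) : Type := {γ : Set (Set (List A)) // IsRegUltrafilter γ}

/-- The Stone topology, generated by the basic sets {γ | L ∈ γ} for L regular. -/
instance (A : Type) : TopologicalSpace (RegStone A) :=
  TopologicalSpace.generateFrom
    {U | ∃ L : Set (List A), RegularLang L ∧ U = {γ : RegStone A | L ∈ γ.1}}

/-! Two words are at profinite distance `< 2⁻ᵏ` iff they are congruent modulo `sepCon A k`: no
monoid with at most `k` elements separates them. By Cayley's theorem this congruence has finite
index, so its classes are regular, and every regular language is a union of its classes for some
`k`. Hence the completion `C` is totally bounded, thus compact, and every regular language `L` is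
clopen in `C`: the closure of its image is a neighbourhood of each of its points. Sending `c` to
the set of regular languages containing all words near `c` is then a continuous map to the Stone
space, injective because the classes have diameter `< 2⁻ᵏ` and surjective by compactness; as the
Stone space is Hausdorff, it is a homeomorphism. -/

open Filter Topology

def cayleyHom {M α : Type*} [Monoid M] (E : M ≃ α) : M →* Function.End α where
  toFun m a := E (m * E.symm a)
  map_one' := funext fun a => by simp [Function.End.one_def]
  map_mul' m n := funext fun a => show _ = E (m * E.symm (E _)) by simp [mul_assoc]

@[simp]
theorem cayleyHom_apply {M α : Type*} [Monoid M] (E : M ≃ α) (m : M) (a : α) :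
    cayleyHom E m a = E (m * E.symm a) := rfl

theorem cayleyHom_injective {M α : Type*} [Monoid M] (E : M ≃ α) :
    Function.Injective (cayleyHom E) := fun m n h => by
  simpa using congrArg E.symm (congrFun h (E 1))

instance {α : Type*} [Finite α] : Finite (Function.End α) := inferInstanceAs (Finite (α → α))

def sepCon (A : Type) (k : ℕ) : Con (FreeMonoid A) where
  r x y := ∀ (M : Type) [Monoid M] [Fintype M], Fintype.card M ≤ k →
    ∀ φ : FreeMonoid A →* M, φ x = φ y
  iseqv :=
    { refl := fun _ _ _ _ _ _ => rfl
      symm := fun h M _ _ hM φ => (h M hM φ).symm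
      trans := fun h₁ h₂ M _ _ hM φ => (h₁ M hM φ).trans (h₂ M hM φ) }
  mul' h₁ h₂ M _ _ hM φ := by rw [map_mul, map_mul, h₁ M hM φ, h₂ M hM φ]

theorem sepCon_of_forall_lift_eq {A : Type} {k : ℕ} {x y : FreeMonoid A}
    (h : ∀ j ≤ k, ∀ g : A → Function.End (Fin j), FreeMonoid.lift g x = FreeMonoid.lift g y) :
    sepCon A k x y := by
  intro M _ _ hM φ
  let ρ := cayleyHom (Fintype.equivFin M)
  have hρ : FreeMonoid.lift (fun a => ρ (φ (.of a))) = ρ.comp φ :=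
    FreeMonoid.hom_eq fun _ => by simp
  apply cayleyHom_injective (Fintype.equivFin M)
  simpa [hρ] using h _ hM fun a => ρ (φ (.of a))

instance {A : Type} [Finite A] {k : ℕ} : Finite (sepCon A k).Quotient := by
  let lifts : FreeMonoid A → ∀ i : Σ j : Fin (k + 1), A → Function.End (Fin j), Fin i.1 → Fin i.1 :=
    fun x i => FreeMonoid.lift i.2 x
  refine Finite.of_surjective (fun p => ((Function.invFun lifts p : FreeMonoid A) : _)) ?_
  refine fun q => Con.induction_on q fun x => ⟨lifts x, (Con.eq _).2 ?_⟩
  refine sepCon_of_forall_lift_eq fun j hj g => ?_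
  exact congrFun (Function.invFun_eq (f := lifts) ⟨x, rfl⟩) ⟨⟨j, Nat.lt_succ_of_le hj⟩, g⟩

theorem exists_separatesCard_le_iff {A : Type} {k : ℕ} {x y : List A} :
    (∃ j ≤ k, SeparatesCard A j x y) ↔ ¬ sepCon A k x y := by
  constructor
  · rintro ⟨j, hj, M, _, _, rfl, φ, hφ⟩ h
    exact hφ (h M hj φ)
  · refine fun h => by_contra fun hs => h fun M _ _ hM φ => by_contra fun hφ => ?_
    exact hs ⟨_, hM, M, _, _, rfl, φ, hφ⟩

theorem pdist_lt_iff_sepCon {A : Type} {k : ℕ} {x y : List A} :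
    pdist x y < ((2 : ℝ) ^ k)⁻¹ ↔ sepCon A k x y := by
  rw [← not_iff_not, ← exists_separatesCard_le_iff, not_lt]
  unfold pdist
  split_ifs with h
  · rw [inv_le_inv₀ (by positivity) (by positivity), pow_le_pow_iff_right₀ one_lt_two]
    exact ⟨fun hk => ⟨_, hk, Nat.sInf_mem h⟩, fun ⟨j, hj, hs⟩ => (Nat.sInf_le hs).trans hj⟩
  · exact iff_of_false (not_le.2 (by positivity)) fun ⟨j, _, hs⟩ => h ⟨j, hs⟩

namespace RegularLang

variable {A : Type} {L K : Set (List A)}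

theorem univ : RegularLang (Set.univ : Set (List A)) :=
  ⟨PUnit, inferInstance, inferInstance, 1, Set.univ, rfl⟩

theorem compl_s9 (hL : RegularLang L) : RegularLang Lᶜ := by
  obtain ⟨M, _, _, φ, S, rfl⟩ := hL
  exact ⟨M, inferInstance, inferInstance, φ, Sᶜ, rfl⟩

theorem inter_s9 (hL : RegularLang L) (hK : RegularLang K) : RegularLang (L ∩ K) := by
  obtain ⟨M, _, _, φ, S, rfl⟩ := hL
  obtain ⟨N, _, _, ψ, T, rfl⟩ := hK
  exact ⟨M × N, inferInstance, inferInstance, φ.prod ψ, S ×ˢ T, rfl⟩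

theorem preimage_mk [Finite A] (k : ℕ) (S : Set (sepCon A k).Quotient) :
    RegularLang ((sepCon A k).mk' ⁻¹' S) :=
  ⟨_, _, Fintype.ofFinite _, (sepCon A k).mk', S, rfl⟩

theorem exists_sepCon_saturated (hL : RegularLang L) :
    ∃ k, ∀ ⦃x y : List A⦄, sepCon A k x y → x ∈ L → y ∈ L := by
  obtain ⟨M, _, _, φ, S, rfl⟩ := hL
  exact ⟨Fintype.card M, fun x y h hx => show φ y ∈ S from h M le_rfl φ ▸ hx⟩

end RegularLang

namespace IsRegUltrafilter

variable {A : Type} {γ δ : Set (Set (List A))} {L : Set (List A)}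

theorem compl_notMem (hγ : IsRegUltrafilter γ) (hL : L ∈ γ) : Lᶜ ∉ γ := fun hLc => by
  obtain ⟨-, -, hempty, -, hinter, -⟩ := hγ
  exact hempty (Set.inter_compl_self L ▸ hinter _ _ hL hLc)

theorem eq_of_subset (hγ : IsRegUltrafilter γ) (hδ : IsRegUltrafilter δ) (h : γ ⊆ δ) :
    γ = δ := by
  refine h.antisymm fun L hL => ?_
  exact (hγ.2.2.2.2.2 L (hδ.1 L hL)).resolve_right fun hLc => hδ.compl_notMem hL (h hLc)

end IsRegUltrafilter

theorem RegStone.exists_mem_compl_mem_of_ne {A : Type} {γ δ : RegStone A} (h : γ ≠ δ) :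
    ∃ L, L ∈ γ.1 ∧ Lᶜ ∈ δ.1 := by
  obtain ⟨L, hL⟩ : ∃ L, ¬(L ∈ γ.1 ↔ L ∈ δ.1) := by
    by_contra! h'
    exact h (Subtype.ext (Set.ext h'))
  by_cases hγL : L ∈ γ.1
  · have hδL : L ∉ δ.1 := fun hδL => hL (iff_of_true hγL hδL)
    exact ⟨L, hγL, (δ.2.2.2.2.2.2 L (γ.2.1 L hγL)).resolve_left hδL⟩
  · have hδL : L ∈ δ.1 := by tauto
    exact ⟨Lᶜ, (γ.2.2.2.2.2.2 L (δ.2.1 L hδL)).resolve_left hγL, (compl_compl L).symm ▸ hδL⟩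

theorem RegStone.isOpen_setOf_mem {A : Type} {L : Set (List A)} (hL : RegularLang L) :
    IsOpen {γ : RegStone A | L ∈ γ.1} :=
  TopologicalSpace.GenerateOpen.basic _ ⟨L, hL, rfl⟩

instance {A : Type} : T2Space (RegStone A) := by
  refine ⟨fun γ δ h => ?_⟩
  obtain ⟨L, hγL, hδL⟩ := RegStone.exists_mem_compl_mem_of_ne h
  have hL := γ.2.1 L hγL
  refine ⟨_, _, RegStone.isOpen_setOf_mem hL, RegStone.isOpen_setOf_mem hL.compl_s9, hγL, hδL, ?_⟩
  exact Set.disjoint_left.2 fun σ hσL hσLc => σ.2.compl_notMem hσL hσLc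

theorem exists_two_pow_inv_lt {ε : ℝ} (hε : 0 < ε) : ∃ k : ℕ, ((2 : ℝ) ^ k)⁻¹ < ε := by
  simpa [inv_pow] using exists_pow_lt_of_lt_one hε (two_inv_lt_one (α := ℝ))

section Completion

variable {A C : Type} [MetricSpace C] {e : List A → C}

theorem sepCon_of_dist_lt_half (hiso : ∀ x y, dist (e x) (e y) = pdist x y) {k : ℕ} {c : C}
    {x y : List A} (hx : dist (e x) c < ((2 : ℝ) ^ k)⁻¹ / 2)
    (hy : dist (e y) c < ((2 : ℝ) ^ k)⁻¹ / 2) : sepCon A k x y := by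
  rw [← pdist_lt_iff_sepCon, ← hiso]
  linarith [dist_triangle_right (e x) (e y) c]

theorem mem_comap_nhds_of_mem_closure (hiso : ∀ x y, dist (e x) (e y) = pdist x y)
    {L : Set (List A)} (hL : RegularLang L) {c : C} (hc : c ∈ closure (e '' L)) :
    L ∈ comap e (𝓝 c) := by
  obtain ⟨k, hk⟩ := hL.exists_sepCon_saturated
  obtain ⟨_, ⟨x₀, hx₀, rfl⟩, hx₀c⟩ :=
    Metric.mem_closure_iff.1 hc (((2 : ℝ) ^ k)⁻¹ / 2) (by positivity)
  refine mem_comap.2 ⟨_, Metric.ball_mem_nhds c (by positivity : (0 : ℝ) < ((2 : ℝ) ^ k)⁻¹ / 2),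
    fun x hx => hk (sepCon_of_dist_lt_half hiso (dist_comm c _ ▸ hx₀c) hx) hx₀⟩

theorem mem_or_compl_mem_comap_nhds (hiso : ∀ x y, dist (e x) (e y) = pdist x y)
    {L : Set (List A)} (hL : RegularLang L) (c : C) :
    L ∈ comap e (𝓝 c) ∨ Lᶜ ∈ comap e (𝓝 c) := by
  by_cases hc : c ∈ closure (e '' L)
  · exact Or.inl (mem_comap_nhds_of_mem_closure hiso hL hc)
  · refine Or.inr (mem_comap.2 ⟨_, isClosed_closure.isOpen_compl.mem_nhds hc, fun x hx hxL => ?_⟩)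
    exact hx (subset_closure (Set.mem_image_of_mem e hxL))

def nhdsLang (e : List A → C) (c : C) : Set (Set (List A)) :=
  {L | RegularLang L ∧ L ∈ comap e (𝓝 c)}

theorem isRegUltrafilter_nhdsLang (hiso : ∀ x y, dist (e x) (e y) = pdist x y)
    (hdense : DenseRange e) (c : C) : IsRegUltrafilter (nhdsLang e c) := by
  have : (comap e (𝓝 c)).NeBot := comap_neBot fun t ht => by
    obtain ⟨_, hy, x, rfl⟩ := mem_closure_iff_nhds.1 (hdense c) t ht
    exact ⟨x, hy⟩
  refine ⟨fun L hL => hL.1, ⟨_, RegularLang.univ, univ_mem⟩, fun h => empty_notMem _ h.2,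
    fun L K hL hK hLK => ⟨hK, mem_of_superset hL.2 hLK⟩,
    fun L K hL hK => ⟨hL.1.inter_s9 hK.1, inter_mem hL.2 hK.2⟩, fun L hL => ?_⟩
  exact (mem_or_compl_mem_comap_nhds hiso hL c).imp (⟨hL, ·⟩) (⟨hL.compl_s9, ·⟩)

def toRegStone (hiso : ∀ x y, dist (e x) (e y) = pdist x y) (hdense : DenseRange e) (c : C) :
    RegStone A :=
  ⟨nhdsLang e c, isRegUltrafilter_nhdsLang hiso hdense c⟩

theorem continuous_toRegStone (hiso : ∀ x y, dist (e x) (e y) = pdist x y)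
    (hdense : DenseRange e) : Continuous (toRegStone hiso hdense) := by
  refine continuous_generateFrom_iff.2 ?_
  rintro _ ⟨L, hL, rfl⟩
  simp only [Set.preimage_ofPred_eq, toRegStone, nhdsLang, Set.mem_ofPred_eq, hL, true_and,
    mem_comap']
  exact isOpen_setOfPred_eventually_nhds

theorem exists_mem_compl_mem_nhdsLang [Finite A] (hiso : ∀ x y, dist (e x) (e y) = pdist x y)
    (hdense : DenseRange e) {c c' : C} (h : c ≠ c') :
    ∃ L, L ∈ nhdsLang e c ∧ Lᶜ ∈ nhdsLang e c' := by
  obtain ⟨k, hk⟩ := exists_two_pow_inv_lt (half_pos (dist_pos.2 h))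
  set r : ℝ := ((2 : ℝ) ^ k)⁻¹
  have hr : 0 < r / 2 := by positivity
  obtain ⟨x₀, hx₀⟩ := Metric.denseRange_iff.1 hdense c _ hr
  have hL := RegularLang.preimage_mk k {(sepCon A k).mk' x₀}
  refine ⟨_, ⟨hL, mem_comap.2 ⟨_, Metric.ball_mem_nhds c hr, fun x hx => ?_⟩⟩,
    ⟨hL.compl_s9, mem_comap.2 ⟨_, Metric.ball_mem_nhds c' hr, fun x hx hxL => ?_⟩⟩⟩
  · exact (Con.eq _).2 (sepCon_of_dist_lt_half hiso hx (dist_comm c _ ▸ hx₀))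
  · have hxx₀ : dist (e x) (e x₀) < r := by
      rw [hiso, pdist_lt_iff_sepCon]
      exact (Con.eq _).1 hxL
    have hxc' : dist (e x) c' < r / 2 := hx
    have := dist_triangle4 c (e x₀) (e x) c'
    linarith [dist_comm (e x₀) (e x), dist_comm (e x) c']

theorem injective_toRegStone [Finite A] (hiso : ∀ x y, dist (e x) (e y) = pdist x y)
    (hdense : DenseRange e) : Function.Injective (toRegStone hiso hdense) := by
  intro c c' hcc'
  by_contra h
  obtain ⟨L, hL, hLc⟩ := exists_mem_compl_mem_nhdsLang hiso hdense h
  have hcc' : nhdsLang e c = nhdsLang e c' := congrArg Subtype.val hcc'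
  exact (isRegUltrafilter_nhdsLang hiso hdense c').compl_notMem (hcc' ▸ hL) hLc

theorem surjective_toRegStone [CompactSpace C] (hiso : ∀ x y, dist (e x) (e y) = pdist x y)
    (hdense : DenseRange e) : Function.Surjective (toRegStone hiso hdense) := by
  rintro ⟨γ, hγ⟩
  obtain ⟨hreg, ⟨L₀, hL₀⟩, hempty, -, hinter, -⟩ := id hγ
  have : Nonempty γ := ⟨⟨L₀, hL₀⟩⟩
  obtain ⟨c, hc⟩ := IsCompact.nonempty_iInter_of_directed_nonempty_isCompact_isClosed
    (fun L : γ => closure (e '' L))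
    (fun L K => ⟨⟨_, hinter _ _ L.2 K.2⟩,
      closure_mono (Set.image_mono Set.inter_subset_left),
      closure_mono (Set.image_mono Set.inter_subset_right)⟩)
    (fun L => ((Set.nonempty_iff_ne_empty.2 fun h => hempty (h ▸ L.2)).image e).closure)
    (fun _ => isClosed_closure.isCompact) (fun _ => isClosed_closure)
  refine ⟨c, Subtype.ext (Eq.symm (hγ.eq_of_subset (isRegUltrafilter_nhdsLang hiso hdense c)
    fun L hL => ⟨hreg L hL, mem_comap_nhds_of_mem_closure hiso (hreg L hL) ?_⟩))⟩
  exact Set.mem_iInter.1 hc ⟨L, hL⟩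

theorem compactSpace_of_dist_eq_pdist [Finite A] [CompleteSpace C]
    (hiso : ∀ x y, dist (e x) (e y) = pdist x y) (hdense : DenseRange e) : CompactSpace C := by
  have htb : TotallyBounded (Set.range e) := by
    refine Metric.totallyBounded_iff.2 fun ε hε => ?_
    obtain ⟨k, hk⟩ := exists_two_pow_inv_lt hε
    let rep : (sepCon A k).Quotient → List A := Function.surjInv (sepCon A k).mk'_surjective
    refine ⟨Set.range (e ∘ rep), Set.finite_range _, ?_⟩
    rintro _ ⟨x, rfl⟩
    refine Set.mem_biUnion ⟨(sepCon A k).mk' x, rfl⟩ (Metric.mem_ball.2 (hk.trans' ?_))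
    exact (hiso _ _).trans_lt <| pdist_lt_iff_sepCon.2 <|
      (Con.eq _).1 (Function.surjInv_eq (sepCon A k).mk'_surjective _).symm
  rw [← isCompact_univ_iff, ← hdense.closure_range]
  exact htb.closure.isCompact_of_isClosed isClosed_closure

end Completion

/-- The free profinite monoid over a finite alphabet A — i.e. any complete
metric space C into which A* embeds isometrically (w.r.t. the profinite metric) and
densely — is homeomorphic to the Stone space of the Boolean algebra of regular languages
over A*. -/
theorem stmt9 {A : Type} [Fintype A] (C : Type) [MetricSpace C] [CompleteSpace C]
    (e : List A → C) (hiso : ∀ x y : List A, dist (e x) (e y) = pdist x y)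
    (hdense : DenseRange e) :
    Nonempty (C ≃ₜ RegStone A) := by
  have : CompactSpace C := compactSpace_of_dist_eq_pdist hiso hdense
  let F := Equiv.ofBijective _
    ⟨injective_toRegStone hiso hdense, surjective_toRegStone hiso hdense⟩
  exact ⟨(continuous_toRegStone hiso hdense).homeoOfEquivCompactToT2 (f := F)⟩
end

section
/- A language L ⊆ A* is regular if and only if its topological closure in the free profinite monoid over A is a clopen set. -/
/-!
If `L = φ⁻¹(S)` for a morphism `φ` onto a monoid of size `k`, words in `L` and in its complement
are at distance at least `2⁻ᵏ`, so the closures of `L` and of its complement are disjoint; by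
density they cover the space, hence each is clopen.

Conversely, words that no monoid of size `≤ k` separates take the same values under all
multiplication tables of size `≤ k` and all letter assignments, a finite amount of data; so `A*`
is totally bounded and the completion is compact. A clopen set of a compact metric space contains
a uniform neighbourhood of itself, and words are isolated points, so for some `k` every word that
no monoid of size `≤ k` separates from a word of `L` lies in `L`. Separation by small monoids is
compatible with concatenation, so such words `x`, `y` satisfy `u x v ∈ L ↔ u y v ∈ L`: the
syntactic congruence of `L` has finite index.
-/

section SyntacticCongruence

variable {M : Type*} [Monoid M]

def syntacticCon (L : Set M) : Con M where
  r x y := ∀ u v, u * x * v ∈ L ↔ u * y * v ∈ L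
  iseqv := ⟨fun _ _ _ => Iff.rfl, fun h u v => (h u v).symm,
    fun h₁ h₂ u v => (h₁ u v).trans (h₂ u v)⟩
  mul' {x y x' y'} hx hy u v := by
    simpa only [mul_assoc] using
      (hx u (x' * v)).trans (by simpa only [mul_assoc] using hy (u * y) v)

theorem mem_iff_of_syntacticCon {L : Set M} {x y : M} (h : syntacticCon L x y) :
    x ∈ L ↔ y ∈ L := by
  simpa using h 1 1

theorem preimage_image_mk_syntacticCon (L : Set M) :
    (syntacticCon L).mk' ⁻¹' ((syntacticCon L).mk' '' L) = L := by
  refine Set.Subset.antisymm ?_ (Set.subset_preimage_image _ _)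
  rintro x ⟨y, hy, hyx⟩
  exact (mem_iff_of_syntacticCon ((syntacticCon L).eq.1 hyx)).1 hy

theorem finite_quotient_syntacticCon {L : Set M} {T : Type*} [Finite T] (f : M → T)
    (hf : ∀ a b, f a = f b → syntacticCon L a b) : Finite (syntacticCon L).Quotient :=
  Finite.of_injective (fun q : (syntacticCon L).Quotient => f q.out) fun p q h => by
    rw [← Quotient.out_eq p, ← Quotient.out_eq q]
    exact (syntacticCon L).eq.2 (hf _ _ h)

end SyntacticCongruence

theorem regularLang_of_finite_quotient_syntacticCon {A : Type} {L : Set (FreeMonoid A)}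
    [Finite (syntacticCon L).Quotient] : RegularLang L :=
  have := Fintype.ofFinite (syntacticCon L).Quotient
  ⟨_, inferInstance, inferInstance, (syntacticCon L).mk', _,
    (preimage_image_mk_syntacticCon L).symm⟩

theorem finite_quotient_syntacticCon_singleton {A : Type} [Finite A] (x : FreeMonoid A) :
    Finite (syntacticCon ({x} : Set (FreeMonoid A))).Quotient := by
  set S := {l : FreeMonoid A | l.length ≤ x.length}
  have hS : S.Finite := List.finite_length_le A x.length
  have : Finite ↥(S ×ˢ S) := (hS.prod hS).to_subtype
  refine finite_quotient_syntacticCon (fun w (p : ↥(S ×ˢ S)) => p.1.1 * w * p.1.2 = x) ?_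
  intro a b hab u v
  have factor_mem : ∀ w, u * w * v = x → (u, v) ∈ S ×ˢ S := fun w hw => by
    have := congrArg FreeMonoid.length hw
    simp only [FreeMonoid.length_mul] at this
    exact ⟨show u.length ≤ x.length by omega, show v.length ≤ x.length by omega⟩
  exact ⟨fun h => (congrFun hab ⟨_, factor_mem a h⟩).mp h,
    fun h => (congrFun hab ⟨_, factor_mem b h⟩).mpr h⟩

section ProfiniteDistance

variable {A : Type}

theorem inv_two_pow_le_pdist {x y : List A} {k : ℕ} (h : SeparatesCard A k x y) :
    ((2 : ℝ) ^ k)⁻¹ ≤ pdist x y := by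
  have hne : {j : ℕ | SeparatesCard A j x y}.Nonempty := ⟨k, h⟩
  rw [pdist, dif_pos hne]
  exact inv_anti₀ (by positivity) (pow_le_pow_right₀ one_le_two (Nat.sInf_le h))

theorem pdist_lt_inv_two_pow {x y : List A} {k : ℕ} (h : ∀ j ≤ k, ¬ SeparatesCard A j x y) :
    pdist x y < ((2 : ℝ) ^ k)⁻¹ := by
  rw [pdist]
  split_ifs with hne
  · have hk : k < sInf {j : ℕ | SeparatesCard A j x y} :=
      lt_of_not_ge fun hle => h _ hle (Nat.sInf_mem hne)
    exact inv_strictAnti₀ (by positivity) (pow_lt_pow_right₀ one_lt_two hk)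
  · positivity

theorem exists_pos_forall_le_pdist [Finite A] (x : List A) :
    ∃ ε > 0, ∀ y ≠ x, ε ≤ pdist x y := by
  let c := syntacticCon ({x} : Set (FreeMonoid A))
  have : Finite c.Quotient := finite_quotient_syntacticCon_singleton x
  have := Fintype.ofFinite c.Quotient
  refine ⟨((2 : ℝ) ^ Fintype.card c.Quotient)⁻¹, by positivity, fun y hy => ?_⟩
  exact inv_two_pow_le_pdist ⟨c.Quotient, inferInstance, inferInstance, rfl, c.mk',
    fun hxy => hy ((mem_iff_of_syntacticCon (c.eq.1 hxy)).1 rfl)⟩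

theorem not_separatesCard_append {x y : List A} {k : ℕ} (h : ¬ SeparatesCard A k x y)
    (u v : List A) : ¬ SeparatesCard A k (u ++ x ++ v) (u ++ y ++ v) := by
  rintro ⟨M, _, _, hcard, φ, hφ⟩
  refine h ⟨M, _, _, hcard, φ, fun hxy => hφ ?_⟩
  change φ (FreeMonoid.ofList u * FreeMonoid.ofList x * FreeMonoid.ofList v) =
    φ (FreeMonoid.ofList u * FreeMonoid.ofList y * FreeMonoid.ofList v)
  rw [map_mul, map_mul, map_mul, map_mul]
  exact congrArg (φ u * · * φ v) hxy

end ProfiniteDistance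

section Fingerprint

variable {A : Type}

/-- Every monoid of cardinality `j ≤ k` is a multiplication table on `Fin j`, so the values of a
word under all tables and all letter assignments determine its images in all such monoids. -/
def FingerprintType (A : Type) (k : ℕ) : Type :=
  (j : Fin (k + 1)) → (Fin j → Fin j → Fin j) → Fin j → (A → Fin j) → Fin j

instance [Finite A] (k : ℕ) : Finite (FingerprintType A k) := by
  unfold FingerprintType; infer_instance

def fingerprint (k : ℕ) (x : List A) : FingerprintType A k :=
  fun _ mul one f => x.foldl (fun c a => mul c (f a)) one

theorem foldl_transport {M N : Type*} [Monoid M] (g : M ≃ N) (φ : FreeMonoid A →* M)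
    (l : List A) (c : N) :
    l.foldl (fun c a => g (g.symm c * φ (FreeMonoid.of a))) c =
      g (g.symm c * φ (FreeMonoid.ofList l)) := by
  induction l generalizing c with
  | nil => simp
  | cons a l ih => simp [ih, FreeMonoid.ofList_cons, mul_assoc]

theorem not_separatesCard_of_fingerprint_eq {k j : ℕ} {x y : List A}
    (h : fingerprint k x = fingerprint k y) (hj : j ≤ k) : ¬ SeparatesCard A j x y := by
  rintro ⟨M, _, _, rfl, φ, hφ⟩
  let g := Fintype.equivFin M
  have hxy := congrFun (congrFun (congrFun (congrFun h ⟨Fintype.card M, by omega⟩)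
    (fun c d => g (g.symm c * g.symm d))) (g 1)) (fun a => g (φ (FreeMonoid.of a)))
  simp only [fingerprint, Equiv.symm_apply_apply, foldl_transport, one_mul] at hxy
  exact hφ (g.injective hxy)

end Fingerprint

theorem regularLang_of_forall_pdist_lt {A : Type} [Finite A] {L : Set (List A)} {δ : ℝ}
    (hδ : 0 < δ) (hL : ∀ x y, pdist x y < δ → x ∈ L → y ∈ L) : RegularLang L := by
  obtain ⟨k, hk⟩ := exists_pow_lt_of_lt_one hδ (inv_lt_one_of_one_lt₀ one_lt_two)
  rw [inv_pow] at hk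
  have close : ∀ {a b : List A}, fingerprint k a = fingerprint k b →
      ∀ u v, pdist (u ++ a ++ v) (u ++ b ++ v) < δ := fun hab u v =>
    (pdist_lt_inv_two_pow fun _ hj =>
      not_separatesCard_append (not_separatesCard_of_fingerprint_eq hab hj) u v).trans hk
  have : Finite (syntacticCon (M := FreeMonoid A) L).Quotient :=
    finite_quotient_syntacticCon (fingerprint k) fun a b hab u v =>
      ⟨hL _ _ (close hab u v), hL _ _ (close hab.symm u v)⟩
  exact regularLang_of_finite_quotient_syntacticCon

section Metric

variable {A : Type} {C : Type} [PseudoMetricSpace C] {e : List A → C}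

theorem totallyBounded_range_of_dist_eq_pdist [Finite A]
    (hiso : ∀ x y : List A, dist (e x) (e y) = pdist x y) : TotallyBounded (Set.range e) := by
  refine Metric.totallyBounded_of_finite_discretization fun ε hε => ?_
  obtain ⟨k, hk⟩ := exists_pow_lt_of_lt_one hε (inv_lt_one_of_one_lt₀ one_lt_two)
  rw [inv_pow] at hk
  refine ⟨FingerprintType A k, Fintype.ofFinite _, fun c => fingerprint k c.2.choose, ?_⟩
  rintro ⟨c, hc⟩ ⟨d, hd⟩ h
  calc dist c d = dist (e hc.choose) (e hd.choose) := by rw [hc.choose_spec, hd.choose_spec]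
    _ = pdist hc.choose hd.choose := hiso _ _
    _ < ((2 : ℝ) ^ k)⁻¹ :=
      pdist_lt_inv_two_pow fun _ hj => not_separatesCard_of_fingerprint_eq h hj
    _ < ε := hk

theorem mem_of_mem_closure_image [Finite A]
    (hiso : ∀ x y : List A, dist (e x) (e y) = pdist x y) {L : Set (List A)} {x : List A}
    (hx : e x ∈ closure (e '' L)) : x ∈ L := by
  obtain ⟨ε, hε, hsep⟩ := exists_pos_forall_le_pdist x
  obtain ⟨_, ⟨y, hy, rfl⟩, hxy⟩ := Metric.mem_closure_iff.1 hx ε hε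
  by_contra hxL
  exact (hsep y (ne_of_mem_of_not_mem hy hxL)).not_gt (hiso x y ▸ hxy)

end Metric

theorem compactSpace_of_denseRange_of_totallyBounded {α X : Type*} [UniformSpace X]
    [CompleteSpace X] {e : α → X} (hd : DenseRange e) (ht : TotallyBounded (Set.range e)) :
    CompactSpace X :=
  ⟨(hd.closure_eq ▸ ht.closure).isCompact_of_isClosed isClosed_univ⟩

theorem isClopen_closure_image_of_le_dist {α X : Type*} [PseudoMetricSpace X] {e : α → X}
    (hd : DenseRange e) {s : Set α} {δ : ℝ} (hδ : 0 < δ)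
    (h : ∀ x ∈ s, ∀ y ∉ s, δ ≤ dist (e x) (e y)) : IsClopen (closure (e '' s)) := by
  have hdisj : Disjoint (closure (e '' s)) (closure (e '' sᶜ)) := by
    refine Set.disjoint_left.2 fun c hc hc' => ?_
    have : dist c c ∈ closure (Set.Ici δ) := map_mem_closure₂ continuous_dist hc hc' <| by
      rintro _ ⟨x, hx, rfl⟩ _ ⟨y, hy, rfl⟩
      exact h x hx y hy
    rw [closure_Ici, dist_self] at this
    exact hδ.not_ge this
  have hcover : closure (e '' s) ∪ closure (e '' sᶜ) = Set.univ := by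
    rw [← closure_union, ← Set.image_union, Set.union_compl_self, Set.image_univ, hd.closure_eq]
  have hcompl := IsCompl.eq_compl ⟨hdisj, codisjoint_iff.2 hcover⟩
  exact ⟨isClosed_closure, hcompl ▸ isClosed_closure.isOpen_compl⟩

/-- A language L ⊆ A* is regular iff its topological closure in the free
profinite monoid over A (any complete metric space into which A* embeds isometrically,
w.r.t. the profinite metric, and densely) is a clopen set. -/
theorem stmt10 {A : Type} [Fintype A] (C : Type) [MetricSpace C] [CompleteSpace C]
    (e : List A → C) (hiso : ∀ x y : List A, dist (e x) (e y) = pdist x y)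
    (hdense : DenseRange e) (L : Set (List A)) :
    RegularLang L ↔ IsClopen (closure (e '' L)) := by
  constructor
  · rintro ⟨M, _, _, φ, S, rfl⟩
    refine isClopen_closure_image_of_le_dist hdense (δ := ((2 : ℝ) ^ Fintype.card M)⁻¹)
      (by positivity) fun x hx y hy => ?_
    rw [hiso]
    exact inv_two_pow_le_pdist
      ⟨M, _, _, rfl, φ, fun hxy => hy (show φ y ∈ S from hxy ▸ hx)⟩
  · intro hK
    have : CompactSpace C := compactSpace_of_denseRange_of_totallyBounded hdense
      (totallyBounded_range_of_dist_eq_pdist hiso)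
    obtain ⟨δ, hδ, hthick⟩ :=
      hK.isClosed.isCompact.exists_thickening_subset_open hK.isOpen subset_rfl
    refine regularLang_of_forall_pdist_lt hδ fun x y hxy hx =>
      mem_of_mem_closure_image hiso (hthick (Metric.mem_thickening_iff.2 ⟨e x, ?_, ?_⟩))
    · exact subset_closure (Set.mem_image_of_mem e hx)
    · rwa [dist_comm, hiso]
end
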